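/- arXiv:1406.7462 — 2 statements merged into one kernel-verified Lean document; each statement's English description precedes it below -/
import Mathlib

section
/- Suppose a ∈ ℝ^n and B ∈ ℝ^{n×n²} satisfy e = a + B(e ⊗ e). Let x̂ ∈ ℝ^n satisfy 0 ≤ x̂ < e entrywise, assume L̂ = I − B(x̂ ⊗ I + I ⊗ x̂) is invertible, and set r = x̂ − a − B(x̂ ⊗ x̂), γ = ‖r‖, ℓ̂ = ‖L̂⁻¹‖, b = ‖B‖. If 1 − 4ℓ̂²bγ ≥ 0 and √(1 − 4ℓ̂²bγ) > max{ 1 − 2ℓ̂b(1 − ‖e − x̂‖), 1 − 2ℓ̂b(1 − ‖x̂‖) }, then there exists x ∈ ℝ^n with x = a + B(x ⊗ x), 0 < x < e entrywise, and ‖x̂ − x‖ ≤ ω*, where ω* = 2ℓ̂γ / (1 + √(1 − 4ℓ̂²bγ)). In particular, if the QVE x = a + B(x ⊗ x) has at most one solution in {x : 0 ≤ x < e} and x* is a solution with 0 ≤ x* < e, then ‖x̂ − x*‖ ≤ ω*. -/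
/-!
Write `x = x̂ + h`. Since `L̂` is the Jacobian of the residual at `x̂`, the QVE becomes the
fixed-point equation `h = T h` with `T h = L̂⁻¹ (B (h ⊗ h) - r)`, and `T` satisfies
`‖T 0‖ ≤ ℓ̂ γ` and `‖T u - T v‖ ≤ ℓ̂ b (‖u‖ + ‖v‖) ‖u - v‖`. By induction, the steps of the
iteration `h_k = T^k 0` are dominated by those of the scalar iteration
`t_{k+1} = ℓ̂ γ + ℓ̂ b t_k²`, which increases to the smaller root `ω*` of
`ℓ̂ b ω² - ω + ℓ̂ γ = 0`. So `h_k` is Cauchy, and its limit is a fixed point with `‖h‖ ≤ ω*`;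
no contraction is needed, which covers the case of a vanishing discriminant. The condition on
`√(1 - 4 ℓ̂² b γ)` says that `ω* < 1 - ‖x̂‖` and `ω* < 1 - ‖e - x̂‖`, which keeps the closed ball
of radius `ω*` about `x̂` inside the open box `0 < x < e`.
-/

open Matrix

noncomputable section

/-- Decode an index `p ∈ Fin (n*n)` (row-major: `p = n*i + j`) into the pair `(i, j)`. -/
def kronDecode {n : ℕ} (p : Fin (n * n)) : Fin n × Fin n :=
  ⟨⟨(p : ℕ) / n, Nat.div_lt_of_lt_mul p.isLt⟩,
   ⟨(p : ℕ) % n, Nat.mod_lt _ (by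
      rcases Nat.eq_zero_or_pos n with h | h
      · exact absurd p.isLt (by simp [h])
      · exact h)⟩⟩

/-- Kronecker product of two vectors in `ℝ^n`, as a vector in `ℝ^(n²)`:
`(u ⊗ v)_{n(i-1)+j} = u_i v_j` (row-major). -/
def kron {n : ℕ} (u v : Fin n → ℝ) : Fin (n * n) → ℝ :=
  fun p => u (kronDecode p).1 * v (kronDecode p).2

/-- Kronecker product `u ⊗ I` of a vector `u ∈ ℝ^n` with the `n×n` identity:
an `n²×n` matrix with entry `u_i · δ_{jk}` at row `(i,j)`, column `k`. -/
def kronVecId {n : ℕ} (u : Fin n → ℝ) : Matrix (Fin (n * n)) (Fin n) ℝ :=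
  fun p k => u (kronDecode p).1 * (if (kronDecode p).2 = k then (1 : ℝ) else 0)

/-- Kronecker product `I ⊗ u` of the `n×n` identity with a vector `u ∈ ℝ^n`:
an `n²×n` matrix with entry `δ_{ik} · u_j` at row `(i,j)`, column `k`. -/
def kronIdVec {n : ℕ} (u : Fin n → ℝ) : Matrix (Fin (n * n)) (Fin n) ℝ :=
  fun p k => (if (kronDecode p).1 = k then (1 : ℝ) else 0) * u (kronDecode p).2

/-- The operator ∞-norm of a real matrix: the maximum absolute row sum.
(The corresponding vector norm on `Fin m → ℝ` is the sup norm `‖·‖`.) -/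
def matNorm {m k : ℕ} (M : Matrix (Fin m) (Fin k) ℝ) : ℝ :=
  ⨆ i, ∑ j, |M i j|

attribute [local instance] Matrix.linftyOpNormedAddCommGroup

open Finset

theorem exists_fixedPoint_dist_le_of_dist_iterate_le {X : Type*} [MetricSpace X]
    [CompleteSpace X] {T : X → X} (hT : Continuous T) {x₀ : X} {δ : ℕ → ℝ} {C : ℝ}
    (hδ : ∀ k, 0 ≤ δ k) (hsum : ∀ N, ∑ k ∈ range N, δ k ≤ C)
    (hstep : ∀ k, dist (T^[k] x₀) (T^[k + 1] x₀) ≤ δ k) :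
    ∃ x, T x = x ∧ dist x₀ x ≤ C := by
  have hδs : Summable δ := summable_of_sum_range_le hδ hsum
  obtain ⟨x, hx⟩ := cauchySeq_tendsto_of_complete (cauchySeq_of_dist_le_of_summable δ hstep hδs)
  refine ⟨x, tendsto_nhds_unique ((hT.tendsto x).comp hx) ?_, ?_⟩
  · simpa only [Function.comp_def, Function.iterate_succ_apply'] using
      hx.comp (Filter.tendsto_add_atTop_nat 1)
  · exact (dist_le_tsum_of_dist_le_of_tendsto₀ δ hstep hδs hx).trans
      (Real.tsum_le_of_sum_range_le hδ hsum)

def quadMajorant (c d : ℝ) : ℕ → ℝ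
  | 0 => 0
  | k + 1 => c + d * quadMajorant c d k ^ 2

theorem quadMajorant_nonneg {c d : ℝ} (hc : 0 ≤ c) (hd : 0 ≤ d) :
    ∀ k, 0 ≤ quadMajorant c d k
  | 0 => le_rfl
  | k + 1 => by
    have := quadMajorant_nonneg hc hd k
    simp only [quadMajorant]
    positivity

theorem quadMajorant_le {c d ω : ℝ} (hc : 0 ≤ c) (hd : 0 ≤ d) (hω : 0 ≤ ω)
    (hfix : c + d * ω ^ 2 = ω) : ∀ k, quadMajorant c d k ≤ ω
  | 0 => hω
  | k + 1 => by
    have hk := quadMajorant_le hc hd hω hfix k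
    have hsq := pow_le_pow_left₀ (quadMajorant_nonneg hc hd k) hk 2
    simp only [quadMajorant]
    nlinarith [mul_le_mul_of_nonneg_left hsq hd]

section QuadraticMajorant

variable {E : Type*} [NormedAddCommGroup E] {T : E → E} {c d : ℝ}

theorem norm_iterate_le_quadMajorant (hd : 0 ≤ d) (hT0 : ‖T 0‖ ≤ c)
    (hT : ∀ u v, ‖T u - T v‖ ≤ d * (‖u‖ + ‖v‖) * ‖u - v‖) (k : ℕ) :
    ‖T^[k] 0‖ ≤ quadMajorant c d k ∧
      ‖T^[k + 1] 0 - T^[k] 0‖ ≤ quadMajorant c d (k + 1) - quadMajorant c d k := by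
  induction k with
  | zero => simpa [quadMajorant] using hT0
  | succ k ih =>
    obtain ⟨hk, hstep⟩ := ih
    set t := quadMajorant c d
    have hk1 : ‖T^[k + 1] 0‖ ≤ t (k + 1) := by
      linarith [norm_le_norm_add_norm_sub' (T^[k + 1] 0) (T^[k] 0)]
    refine ⟨hk1, ?_⟩
    calc ‖T^[k + 2] 0 - T^[k + 1] 0‖
        ≤ d * (‖T^[k + 1] 0‖ + ‖T^[k] 0‖) * ‖T^[k + 1] 0 - T^[k] 0‖ := by
          rw [Function.iterate_succ_apply' T (k + 1), Function.iterate_succ_apply' T k]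
          exact hT _ _
      _ ≤ d * (t (k + 1) + t k) * (t (k + 1) - t k) := by
          have hsum : 0 ≤ t (k + 1) + t k := by
            linarith [norm_nonneg (T^[k + 1] 0), norm_nonneg (T^[k] 0)]
          gcongr
      _ = t (k + 2) - t (k + 1) := by
          simp only [t, quadMajorant]
          ring

theorem exists_fixedPoint_norm_le_of_quadMajorant [CompleteSpace E] (hTc : Continuous T)
    (hd : 0 ≤ d) (hT0 : ‖T 0‖ ≤ c) (hT : ∀ u v, ‖T u - T v‖ ≤ d * (‖u‖ + ‖v‖) * ‖u - v‖)
    {ω : ℝ} (hω : 0 ≤ ω) (hfix : c + d * ω ^ 2 = ω) : ∃ h, T h = h ∧ ‖h‖ ≤ ω := by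
  have hc : 0 ≤ c := (norm_nonneg _).trans hT0
  have hiter := norm_iterate_le_quadMajorant hd hT0 hT
  obtain ⟨h, hTh, hdist⟩ := exists_fixedPoint_dist_le_of_dist_iterate_le hTc (x₀ := 0)
    (δ := fun k => quadMajorant c d (k + 1) - quadMajorant c d k) (C := ω)
    (fun k => (norm_nonneg _).trans (hiter k).2)
    (fun N => by
      rw [sum_range_sub]
      simpa [quadMajorant] using quadMajorant_le hc hd hω hfix N)
    (fun k => by rw [dist_comm, dist_eq_norm]; exact (hiter k).2)
  exact ⟨h, hTh, by simpa using hdist⟩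

end QuadraticMajorant

theorem matNorm_eq_norm {m k : ℕ} (M : Matrix (Fin m) (Fin k) ℝ) : matNorm M = ‖M‖ := by
  rw [linfty_opNorm_def, matNorm]
  refine le_antisymm (Real.iSup_le (fun i => ?_) (by positivity)) ?_
  · have := Finset.le_sup (f := fun i => ∑ j, ‖M i j‖₊) (mem_univ i)
    simpa [← NNReal.coe_le_coe, Real.norm_eq_abs] using this
  · have h0 : 0 ≤ ⨆ i, ∑ j, |M i j| := Real.iSup_nonneg fun i => by positivity
    rw [← NNReal.coe_mk _ h0, NNReal.coe_le_coe]
    refine Finset.sup_le fun i _ => ?_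
    rw [← NNReal.coe_le_coe]
    simpa [Real.norm_eq_abs] using
      le_ciSup (f := fun i => ∑ j, |M i j|) (Set.finite_range _).bddAbove i

section

variable {n : ℕ}

theorem norm_kron_le (u v : Fin n → ℝ) : ‖kron u v‖ ≤ ‖u‖ * ‖v‖ := by
  refine (pi_norm_le_iff_of_nonneg (by positivity)).2 fun p => ?_
  rw [kron, norm_mul]
  exact mul_le_mul (norm_le_pi_norm u _) (norm_le_pi_norm v _) (norm_nonneg _) (norm_nonneg u)

theorem continuous_kron_self : Continuous fun h : Fin n → ℝ => kron h h :=
  continuous_pi fun _ => (continuous_apply _).mul (continuous_apply _)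

theorem kron_add_add (u h : Fin n → ℝ) :
    kron (u + h) (u + h) = kron u u + (kron u h + kron h u) + kron h h := by
  funext p
  simp only [kron, Pi.add_apply]
  ring

theorem kron_self_sub_kron_self (u v : Fin n → ℝ) :
    kron u u - kron v v = kron u (u - v) + kron (u - v) v := by
  funext p
  simp only [kron, Pi.add_apply, Pi.sub_apply]
  ring

theorem kronVecId_add_kronIdVec_mulVec (u h : Fin n → ℝ) :
    (kronVecId u + kronIdVec u) *ᵥ h = kron u h + kron h u := by
  funext p
  simp [mulVec, dotProduct, kronVecId, kronIdVec, kron, mul_ite,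
    sum_add_distrib, mul_comm, mul_add]

theorem norm_mulVec_mulVec_kron_sub_le {m : ℕ} (M : Matrix (Fin m) (Fin n) ℝ)
    (B : Matrix (Fin n) (Fin (n * n)) ℝ) (u v : Fin n → ℝ) :
    ‖M *ᵥ (B *ᵥ (kron u u - kron v v))‖ ≤ ‖M‖ * ‖B‖ * (‖u‖ + ‖v‖) * ‖u - v‖ := by
  have hkron : ‖kron u u - kron v v‖ ≤ (‖u‖ + ‖v‖) * ‖u - v‖ := by
    rw [kron_self_sub_kron_self]
    calc _ ≤ ‖kron u (u - v)‖ + ‖kron (u - v) v‖ := norm_add_le _ _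
      _ ≤ ‖u‖ * ‖u - v‖ + ‖u - v‖ * ‖v‖ := add_le_add (norm_kron_le _ _) (norm_kron_le _ _)
      _ = (‖u‖ + ‖v‖) * ‖u - v‖ := by ring
  calc _ ≤ ‖M‖ * (‖B‖ * ‖kron u u - kron v v‖) :=
        (linfty_opNorm_mulVec _ _).trans (by gcongr; exact linfty_opNorm_mulVec _ _)
    _ ≤ ‖M‖ * (‖B‖ * ((‖u‖ + ‖v‖) * ‖u - v‖)) := by gcongr
    _ = ‖M‖ * ‖B‖ * (‖u‖ + ‖v‖) * ‖u - v‖ := by ring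

theorem qve_residual_add (a x h : Fin n → ℝ) (B : Matrix (Fin n) (Fin (n * n)) ℝ) :
    (x + h) - a - B *ᵥ kron (x + h) (x + h) =
      (x - a - B *ᵥ kron x x) + (1 - B * (kronVecId x + kronIdVec x)) *ᵥ h - B *ᵥ kron h h := by
  rw [kron_add_add, sub_mulVec, one_mulVec, ← mulVec_mulVec, kronVecId_add_kronIdVec_mulVec]
  simp only [mulVec_add]
  abel

theorem add_eq_qve_of_newton_fixedPoint {a x h : Fin n → ℝ} {B : Matrix (Fin n) (Fin (n * n)) ℝ}
    {L : Matrix (Fin n) (Fin n) ℝ} (hL : L = 1 - B * (kronVecId x + kronIdVec x))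
    (hLu : IsUnit L) (hh : L⁻¹ *ᵥ (B *ᵥ kron h h - (x - a - B *ᵥ kron x x)) = h) :
    x + h = a + B *ᵥ kron (x + h) (x + h) := by
  have hLh : L *ᵥ h = B *ᵥ kron h h - (x - a - B *ᵥ kron x x) := by
    conv_lhs => rw [← hh]
    rw [mulVec_mulVec, mul_nonsing_inv _ ((isUnit_iff_isUnit_det L).mp hLu), one_mulVec]
  have hres := qve_residual_add a x h B
  rw [← hL, hLh] at hres
  rw [← sub_eq_zero, ← sub_sub, hres]
  abel

theorem pos_and_lt_one_of_norm_sub_le {x y : Fin n → ℝ} {ω : ℝ} (hxy : ‖y - x‖ ≤ ω)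
    (h0 : ω < 1 - ‖(fun _ => (1 : ℝ)) - y‖) (h1 : ω < 1 - ‖y‖) (i : Fin n) :
    0 < x i ∧ x i < 1 := by
  have hi : |y i - x i| ≤ ω := (norm_le_pi_norm (y - x) i).trans hxy
  have h0i : |1 - y i| ≤ ‖(fun _ => (1 : ℝ)) - y‖ := norm_le_pi_norm ((fun _ => (1 : ℝ)) - y) i
  have h1i : |y i| ≤ ‖y‖ := norm_le_pi_norm y i
  have := abs_le.mp hi
  constructor <;> linarith [le_abs_self (1 - y i), le_abs_self (y i)]

end

/-- The smaller root `(1 - √(1 - 4ℓ²bγ)) / (2ℓb)` of `ℓ b ω² - ω + ℓ γ = 0`, in the rationalized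
form that stays valid when `ℓ b = 0`. -/
def quadSmallRoot (ℓ b γ : ℝ) : ℝ := 2 * ℓ * γ / (1 + √(1 - 4 * ℓ ^ 2 * b * γ))

section QuadSmallRoot

variable {ℓ b γ : ℝ}

theorem quadSmallRoot_isRoot (hdisc : 0 ≤ 1 - 4 * ℓ ^ 2 * b * γ) :
    ℓ * γ + ℓ * b * quadSmallRoot ℓ b γ ^ 2 = quadSmallRoot ℓ b γ := by
  rw [quadSmallRoot]
  set s := √(1 - 4 * ℓ ^ 2 * b * γ)
  have hs : s ^ 2 = 1 - 4 * ℓ ^ 2 * b * γ := Real.sq_sqrt hdisc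
  have hpos : 0 < 1 + s := by positivity
  field_simp
  linear_combination ℓ * γ * hs

theorem quadSmallRoot_lt {t : ℝ} (hℓb : 0 ≤ ℓ * b) (hdisc : 0 ≤ 1 - 4 * ℓ ^ 2 * b * γ)
    (ht : 1 - 2 * ℓ * b * t < √(1 - 4 * ℓ ^ 2 * b * γ)) : quadSmallRoot ℓ b γ < t := by
  set s := √(1 - 4 * ℓ ^ 2 * b * γ)
  have hs : s ^ 2 = 1 - 4 * ℓ ^ 2 * b * γ := Real.sq_sqrt hdisc
  have hpos : 0 < 1 + s := by positivity
  rcases hℓb.eq_or_lt with hzero | hℓb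
  · have hs1 : s ^ 2 = 1 := by linear_combination hs + 4 * ℓ * γ * hzero
    have hs_gt : 1 < s := by
      rw [show 2 * ℓ * b * t = 2 * (ℓ * b) * t by ring, ← hzero] at ht
      linarith
    nlinarith
  · rw [quadSmallRoot, div_lt_iff₀ hpos]
    nlinarith [mul_lt_mul_of_pos_right ht hpos]

end QuadSmallRoot

theorem stmt4_general {n : ℕ}
    (a : Fin n → ℝ) (B : Matrix (Fin n) (Fin (n * n)) ℝ)
    (e : Fin n → ℝ) (he : e = fun _ => (1 : ℝ))
    (xh : Fin n → ℝ)
    (Lh : Matrix (Fin n) (Fin n) ℝ)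
    (hLh : Lh = 1 - B * (kronVecId xh + kronIdVec xh))
    (hLhinv : IsUnit Lh)
    (r : Fin n → ℝ) (hr : r = xh - a - B *ᵥ kron xh xh)
    (γ ℓh b : ℝ)
    (hγ : γ = ‖r‖) (hℓh : ℓh = matNorm Lh⁻¹) (hb : b = matNorm B)
    (hdisc : 0 ≤ 1 - 4 * ℓh ^ 2 * b * γ)
    (hcond : max (1 - 2 * ℓh * b * (1 - ‖e - xh‖)) (1 - 2 * ℓh * b * (1 - ‖xh‖)) <
      Real.sqrt (1 - 4 * ℓh ^ 2 * b * γ)) :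
    (∃ x : Fin n → ℝ, x = a + B *ᵥ kron x x ∧ (∀ i, 0 < x i ∧ x i < e i) ∧
      ‖xh - x‖ ≤ 2 * ℓh * γ / (1 + Real.sqrt (1 - 4 * ℓh ^ 2 * b * γ))) ∧
    (∀ xs : Fin n → ℝ,
      (∀ x y : Fin n → ℝ,
        x = a + B *ᵥ kron x x → (∀ i, 0 ≤ x i ∧ x i < e i) →
        y = a + B *ᵥ kron y y → (∀ i, 0 ≤ y i ∧ y i < e i) → x = y) →
      xs = a + B *ᵥ kron xs xs → (∀ i, 0 ≤ xs i ∧ xs i < e i) →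
      ‖xh - xs‖ ≤ 2 * ℓh * γ / (1 + Real.sqrt (1 - 4 * ℓh ^ 2 * b * γ))) := by
  subst he
  rw [matNorm_eq_norm] at hℓh hb
  have hℓ : 0 ≤ ℓh := hℓh ▸ norm_nonneg _
  have hγ0 : 0 ≤ γ := hγ ▸ norm_nonneg _
  have hb0 : 0 ≤ b := hb ▸ norm_nonneg _
  set T : (Fin n → ℝ) → Fin n → ℝ := fun h => Lh⁻¹ *ᵥ (B *ᵥ kron h h - r)
  have hTc : Continuous T :=
    continuous_const.matrix_mulVec ((continuous_const.matrix_mulVec continuous_kron_self).sub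
      continuous_const)
  have hT0 : ‖T 0‖ ≤ ℓh * γ := by
    have hkron0 : kron (0 : Fin n → ℝ) 0 = 0 := funext fun _ => zero_mul _
    simpa [T, hℓh, hγ, hkron0] using linfty_opNorm_mulVec Lh⁻¹ (-r)
  have hT : ∀ u v, ‖T u - T v‖ ≤ ℓh * b * (‖u‖ + ‖v‖) * ‖u - v‖ := fun u v => by
    simpa [T, ← mulVec_sub, hℓh, hb] using norm_mulVec_mulVec_kron_sub_le Lh⁻¹ B u v
  obtain ⟨h, hTh, hhω⟩ := exists_fixedPoint_norm_le_of_quadMajorant hTc (mul_nonneg hℓ hb0)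
    hT0 hT (by unfold quadSmallRoot; positivity) (quadSmallRoot_isRoot hdisc)
  have hsol := add_eq_qve_of_newton_fixedPoint hLh hLhinv (by rw [← hr]; exact hTh)
  have hdist : ‖xh - (xh + h)‖ ≤ quadSmallRoot ℓh b γ := by simpa using hhω
  obtain ⟨hcond_e, hcond_x⟩ := max_lt_iff.mp hcond
  have hbox := pos_and_lt_one_of_norm_sub_le hdist
    (quadSmallRoot_lt (mul_nonneg hℓ hb0) hdisc hcond_e)
    (quadSmallRoot_lt (mul_nonneg hℓ hb0) hdisc hcond_x)
  refine ⟨⟨xh + h, hsol, hbox, hdist⟩, fun xs huniq hxs hxs_box => ?_⟩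
  rw [← huniq _ xs hsol (fun i => ⟨(hbox i).1.le, (hbox i).2⟩) hxs hxs_box]
  exact hdist

/-- Theorem 2.7 of the paper: under `e = a + B(e⊗e)`, if `0 ≤ x̂ < e`
entrywise, `L̂ = I − B(x̂⊗I + I⊗x̂)` is invertible, `r = x̂ − a − B(x̂⊗x̂)`, `γ = ‖r‖`,
`ℓ̂ = ‖L̂⁻¹‖`, `b = ‖B‖`, and `1 − 4ℓ̂²bγ ≥ 0` and
`√(1 − 4ℓ̂²bγ) > max{1 − 2ℓ̂b(1 − ‖e − x̂‖), 1 − 2ℓ̂b(1 − ‖x̂‖)}`, then the QVE has a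
solution `x` with `0 < x < e` entrywise and `‖x̂ − x‖ ≤ ω* = 2ℓ̂γ/(1 + √(1 − 4ℓ̂²bγ))`;
in particular, if the QVE has at most one solution in `{x : 0 ≤ x < e}` and `x*` is
such a solution, then `‖x̂ − x*‖ ≤ ω*`. -/
theorem stmt4 {n : ℕ} (hn : 1 ≤ n)
    (a : Fin n → ℝ) (B : Matrix (Fin n) (Fin (n * n)) ℝ)
    (e : Fin n → ℝ) (he : e = fun _ => (1 : ℝ))
    (heq : e = a + B *ᵥ kron e e)
    (xh : Fin n → ℝ)
    (hxh0 : ∀ i, 0 ≤ xh i) (hxh1 : ∀ i, xh i < e i)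
    (Lh : Matrix (Fin n) (Fin n) ℝ)
    (hLh : Lh = 1 - B * (kronVecId xh + kronIdVec xh))
    (hLhinv : IsUnit Lh)
    (r : Fin n → ℝ) (hr : r = xh - a - B *ᵥ kron xh xh)
    (γ ℓh b : ℝ)
    (hγ : γ = ‖r‖) (hℓh : ℓh = matNorm Lh⁻¹) (hb : b = matNorm B)
    (hdisc : 0 ≤ 1 - 4 * ℓh ^ 2 * b * γ)
    (hcond : max (1 - 2 * ℓh * b * (1 - ‖e - xh‖)) (1 - 2 * ℓh * b * (1 - ‖xh‖)) <
      Real.sqrt (1 - 4 * ℓh ^ 2 * b * γ)) :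
    (∃ x : Fin n → ℝ, x = a + B *ᵥ kron x x ∧ (∀ i, 0 < x i ∧ x i < e i) ∧
      ‖xh - x‖ ≤ 2 * ℓh * γ / (1 + Real.sqrt (1 - 4 * ℓh ^ 2 * b * γ))) ∧
    (∀ xs : Fin n → ℝ,
      (∀ x y : Fin n → ℝ,
        x = a + B *ᵥ kron x x → (∀ i, 0 ≤ x i ∧ x i < e i) →
        y = a + B *ᵥ kron y y → (∀ i, 0 ≤ y i ∧ y i < e i) → x = y) →
      xs = a + B *ᵥ kron xs xs → (∀ i, 0 ≤ xs i ∧ xs i < e i) →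
      ‖xh - xs‖ ≤ 2 * ℓh * γ / (1 + Real.sqrt (1 - 4 * ℓh ^ 2 * b * γ))) :=
  stmt4_general a B e he xh Lh hLh hLhinv r hr γ ℓh b hγ hℓh hb hdisc hcond

end
end

section
/- Let a ∈ ℝ^n, B ∈ ℝ^{n×n²}, and let x ∈ ℝ^n satisfy x = a + B(x ⊗ x). Let x̂ ∈ ℝ^n, set r = x̂ − a − B(x̂ ⊗ x̂), and suppose L̂ = I − B(x̂ ⊗ I + I ⊗ x̂) is invertible. Then L̂(x̂ − x) = r − B((x̂ − x) ⊗ (x̂ − x)), and consequently ‖x̂ − x‖ ≤ ‖L̂⁻¹‖·‖r‖ + ‖L̂⁻¹‖·‖B‖·‖x̂ − x‖². -/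
open Matrix

noncomputable section

lemma matNorm_nonneg {m k : ℕ} (M : Matrix (Fin m) (Fin k) ℝ) : 0 ≤ matNorm M :=
  Real.iSup_nonneg fun i => Finset.sum_nonneg fun j _ => abs_nonneg _

lemma mulVec_norm_le {m k : ℕ} (M : Matrix (Fin m) (Fin k) ℝ) (v : Fin k → ℝ) :
    ‖M *ᵥ v‖ ≤ matNorm M * ‖v‖ := by
  have h0 : 0 ≤ matNorm M * ‖v‖ := mul_nonneg (matNorm_nonneg M) (norm_nonneg v)
  rw [pi_norm_le_iff_of_nonneg h0]
  intro i
  calc ‖(M *ᵥ v) i‖ = |∑ j, M i j * v j| := rfl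
    _ ≤ ∑ j, |M i j * v j| := Finset.abs_sum_le_sum_abs _ _
    _ ≤ ∑ j, |M i j| * ‖v‖ := by
        refine Finset.sum_le_sum fun j _ => ?_
        rw [abs_mul]
        exact mul_le_mul_of_nonneg_left (norm_le_pi_norm v j) (abs_nonneg _)
    _ = (∑ j, |M i j|) * ‖v‖ := (Finset.sum_mul _ _ _).symm
    _ ≤ matNorm M * ‖v‖ := by
        refine mul_le_mul_of_nonneg_right ?_ (norm_nonneg v)
        exact le_ciSup (f := fun i => ∑ j, |M i j|) (Set.Finite.bddAbove (Set.finite_range _)) i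

lemma kronVecId_mulVec {n : ℕ} (u w : Fin n → ℝ) : kronVecId u *ᵥ w = kron u w := by
  funext p
  simp [kronVecId, Matrix.mulVec, dotProduct, kron, mul_ite, mul_assoc]

lemma kronIdVec_mulVec {n : ℕ} (u w : Fin n → ℝ) : kronIdVec u *ᵥ w = kron w u := by
  funext p
  simp [kronIdVec, Matrix.mulVec, dotProduct, kron, ite_mul, mul_comm]

lemma kron_norm_le {n : ℕ} (e : Fin n → ℝ) : ‖kron e e‖ ≤ ‖e‖ ^ 2 := by
  have h0 : (0:ℝ) ≤ ‖e‖ ^ 2 := sq_nonneg _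
  rw [pi_norm_le_iff_of_nonneg h0]
  intro p
  have : ‖kron e e p‖ = |e (kronDecode p).1| * |e (kronDecode p).2| := by
    simp [kron, abs_mul]
  rw [this, sq]
  exact mul_le_mul (norm_le_pi_norm e _) (norm_le_pi_norm e _) (abs_nonneg _) (norm_nonneg e)

/-- if `x = a + B(x⊗x)`, `r = x̂ − a − B(x̂⊗x̂)` and
`L̂ = I − B(x̂⊗I + I⊗x̂)` is invertible, then
`L̂(x̂ − x) = r − B((x̂ − x) ⊗ (x̂ − x))` and
`‖x̂ − x‖ ≤ ‖L̂⁻¹‖‖r‖ + ‖L̂⁻¹‖‖B‖‖x̂ − x‖²`. -/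
theorem stmt8 {n : ℕ} (hn : 1 ≤ n)
    (a : Fin n → ℝ) (B : Matrix (Fin n) (Fin (n * n)) ℝ)
    (x : Fin n → ℝ) (hx : x = a + B *ᵥ kron x x)
    (xh : Fin n → ℝ)
    (r : Fin n → ℝ) (hr : r = xh - a - B *ᵥ kron xh xh)
    (Lh : Matrix (Fin n) (Fin n) ℝ)
    (hLh : Lh = 1 - B * (kronVecId xh + kronIdVec xh))
    (hLhinv : IsUnit Lh) :
    Lh *ᵥ (xh - x) = r - B *ᵥ kron (xh - x) (xh - x) ∧
    ‖xh - x‖ ≤ matNorm Lh⁻¹ * ‖r‖ + matNorm Lh⁻¹ * matNorm B * ‖xh - x‖ ^ 2 := by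
  set e : Fin n → ℝ := xh - x with he
  clear_value e
  have hkron : kron xh xh - kron x x = kron xh e + kron e xh - kron e e := by
    rw [he]
    funext p
    simp only [kron, Pi.sub_apply, Pi.add_apply]
    ring
  have h1 : e = r + (B *ᵥ kron xh xh - B *ᵥ kron x x) := by
    rw [he]
    funext i
    have hxi := congrFun hx i
    have hri := congrFun hr i
    simp only [Pi.add_apply, Pi.sub_apply] at hxi hri ⊢
    linarith
  have hd : e = r + B *ᵥ (kron xh e + kron e xh) - B *ᵥ kron e e := by
    rw [← Matrix.mulVec_sub, hkron, Matrix.mulVec_sub] at h1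
    conv_lhs => rw [h1]
    abel
  have heq : Lh *ᵥ e = r - B *ᵥ kron e e := by
    have h2 : Lh *ᵥ e = e - B *ᵥ (kron xh e + kron e xh) := by
      rw [hLh, Matrix.sub_mulVec, Matrix.one_mulVec, ← Matrix.mulVec_mulVec,
        Matrix.add_mulVec, kronVecId_mulVec, kronIdVec_mulVec]
    rw [h2]
    nth_rewrite 1 [hd]
    abel
  refine ⟨heq, ?_⟩
  have hinv : e = Lh⁻¹ *ᵥ (r - B *ᵥ kron e e) := by
    rw [← heq, Matrix.mulVec_mulVec,
      Matrix.nonsing_inv_mul Lh ((Matrix.isUnit_iff_isUnit_det Lh).mp hLhinv),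
      Matrix.one_mulVec]
  calc ‖e‖ = ‖Lh⁻¹ *ᵥ (r - B *ᵥ kron e e)‖ := by rw [← hinv]
    _ ≤ matNorm Lh⁻¹ * ‖r - B *ᵥ kron e e‖ := mulVec_norm_le _ _
    _ ≤ matNorm Lh⁻¹ * (‖r‖ + ‖B *ᵥ kron e e‖) :=
        mul_le_mul_of_nonneg_left (norm_sub_le _ _) (matNorm_nonneg _)
    _ = matNorm Lh⁻¹ * ‖r‖ + matNorm Lh⁻¹ * ‖B *ᵥ kron e e‖ := by ring
    _ ≤ matNorm Lh⁻¹ * ‖r‖ + matNorm Lh⁻¹ * (matNorm B * ‖kron e e‖) := by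
        have h := mul_le_mul_of_nonneg_left (mulVec_norm_le B (kron e e)) (matNorm_nonneg Lh⁻¹)
        linarith
    _ ≤ matNorm Lh⁻¹ * ‖r‖ + matNorm Lh⁻¹ * matNorm B * ‖e‖ ^ 2 := by
        have h := mul_le_mul_of_nonneg_left (kron_norm_le e)
          (mul_nonneg (matNorm_nonneg Lh⁻¹) (matNorm_nonneg B))
        rw [mul_assoc] at h
        linarith

end
end
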